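/- arXiv:2405.02164 — 7 statements merged into one kernel-verified Lean document; each statement's English description precedes it below -/
import Mathlib

section
/- The number of parking functions of length n is (n+1)^(n-1), where a parking function of length n is a sequence (a_1,...,a_n) of positive integers whose increasing rearrangement b_1 ≤ b_2 ≤ ... ≤ b_n satisfies b_i ≤ i for all i. -/
open Finset


/-- A parking function of length `n` : a sequence of positive integers
whose increasing rearrangement `b₁ ≤ ⋯ ≤ b_n` satisfies `b_i ≤ i`;
equivalently, there is a permutation `σ` with `a (σ i) ≤ i + 1` for all `i`. -/
def IsParkingFunction {n : ℕ} (a : Fin n → ℕ+) : Prop :=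
  ∃ σ : Equiv.Perm (Fin n), ∀ i : Fin n, (a (σ i) : ℕ) ≤ (i : ℕ) + 1

namespace ParkingProof

variable {n : ℕ}


lemma count_of_pf (a : Fin n → ℕ+) (σ : Equiv.Perm (Fin n))
    (hσ : ∀ i : Fin n, (a (σ i) : ℕ) ≤ (i : ℕ) + 1) {k : ℕ} (hk : k ≤ n) :
    k ≤ (univ.filter (fun i => (a i : ℕ) ≤ k)).card := by
  have hinj : Function.Injective (fun j : Fin k => σ (Fin.castLE hk j)) := by
    intro x y h
    have := σ.injective h
    exact Fin.castLE_injective hk this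
  have hsub : (univ : Finset (Fin k)).image (fun j => σ (Fin.castLE hk j)) ⊆
      univ.filter (fun i => (a i : ℕ) ≤ k) := by
    intro i hi
    simp only [mem_image, mem_univ, true_and] at hi
    obtain ⟨j, rfl⟩ := hi
    simp only [mem_filter, mem_univ, true_and]
    have h1 := hσ (Fin.castLE hk j)
    have h2 : ((Fin.castLE hk j : Fin n) : ℕ) = (j : ℕ) := rfl
    have := j.isLt
    omega
  have hc := Finset.card_le_card hsub
  rwa [Finset.card_image_of_injective _ hinj, card_univ, Fintype.card_fin] at hc

lemma pf_of_count (a : Fin n → ℕ+)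
    (h : ∀ k, 1 ≤ k → k ≤ n → k ≤ (univ.filter (fun i => (a i : ℕ) ≤ k)).card) :
    IsParkingFunction a := by
  refine ⟨Tuple.sort a, fun i => ?_⟩
  by_contra hcon
  push_neg at hcon
  have hmono : Monotone (a ∘ Tuple.sort a) := Tuple.monotone_sort a
  -- every m with a m ≤ i+1 has (sort a)⁻¹ m < i
  have hsub : univ.filter (fun m => (a m : ℕ) ≤ (i : ℕ) + 1) ⊆
      (Finset.Iio i).image (Tuple.sort a) := by
    intro m hm
    simp only [mem_filter, mem_univ, true_and] at hm
    simp only [mem_image, Finset.mem_Iio]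
    refine ⟨(Tuple.sort a)⁻¹ m, ?_, by simp⟩
    by_contra hlt
    push_neg at hlt
    have : a (Tuple.sort a i) ≤ a (Tuple.sort a ((Tuple.sort a)⁻¹ m)) := hmono hlt
    rw [show Tuple.sort a ((Tuple.sort a)⁻¹ m) = m from (Tuple.sort a).apply_symm_apply m] at this
    have h2 : (a (Tuple.sort a i) : ℕ) ≤ (a m : ℕ) := this
    omega
  have hc := Finset.card_le_card hsub
  have hk := h ((i : ℕ) + 1) (by omega) i.isLt
  have := Finset.card_image_le (f := Tuple.sort a) (s := Finset.Iio i)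
  rw [Fin.card_Iio] at this
  omega

lemma pf_iff_count (a : Fin n → ℕ+) :
    IsParkingFunction a ↔
      ∀ k, 1 ≤ k → k ≤ n → k ≤ (univ.filter (fun i => (a i : ℕ) ≤ k)).card := by
  constructor
  · rintro ⟨σ, hσ⟩ k _ hk
    exact count_of_pf a σ hσ hk
  · exact pf_of_count a



lemma sum_zmod (v : ZMod (n+1) → ℤ) :
    ∑ j ∈ range (n+1), v (j : ℕ) = ∑ s : ZMod (n+1), v s := by
  refine Finset.sum_nbij' (fun j => ((j : ℕ) : ZMod (n+1))) (fun s => s.val) ?_ ?_ ?_ ?_ ?_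
  · intro j hj; exact mem_univ _
  · intro s hs
    simp only [mem_range]
    exact ZMod.val_lt s
  · intro j hj
    simp only [mem_range] at hj
    exact ZMod.val_cast_of_lt hj
  · intro s hs
    exact ZMod.natCast_rightInverse s
  · intro j hj; rfl

lemma cycle_lemma (u : ZMod (n+1) → ℤ)     (hsum : ∑ s, u s = -1) :
    ∃! t : ZMod (n+1), ∀ k ≤ n, 0 ≤ ∑ j ∈ range k, u (t + (j : ℕ)) := by
  classical
  set S : ℕ → ℤ := fun k => ∑ j ∈ range k, u ((j : ℕ) : ZMod (n+1)) with hS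
  have window : ∀ t k : ℕ, ∑ j ∈ range k, u (((t : ℕ) : ZMod (n+1)) + (j : ℕ)) =
      S (t + k) - S t := by
    intro t k
    have h1 : S (t + k) - S t = ∑ j ∈ Ico t (t + k), u ((j : ℕ) : ZMod (n+1)) := by
      rw [hS]
      rw [Finset.sum_Ico_eq_sub _ (Nat.le_add_right t k)]
    rw [h1, Finset.sum_Ico_eq_sum_range]
    simp only [Nat.add_sub_cancel_left]
    apply Finset.sum_congr rfl
    intro j _
    push_cast
    ring_nf
  have period : ∀ m : ℕ, S (m + (n+1)) = S m - 1 := by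
    intro m
    have h1 : S (m + (n+1)) - S m = ∑ j ∈ range (n+1),
        u (((m : ℕ) : ZMod (n+1)) + (j : ℕ)) := (window m (n+1)).symm
    have h2 : ∑ j ∈ range (n+1), u (((m : ℕ) : ZMod (n+1)) + (j : ℕ)) =
        ∑ s : ZMod (n+1), u ((m : ZMod (n+1)) + s) := sum_zmod (fun s => u ((m : ZMod (n+1)) + s))
    have h3 : ∑ s : ZMod (n+1), u ((m : ZMod (n+1)) + s) = ∑ s : ZMod (n+1), u s :=
      Fintype.sum_equiv (Equiv.addLeft (m : ZMod (n+1))) _ _ (fun s => rfl)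
    have := h1.trans (h2.trans (h3.trans hsum))
    omega
  -- least minimizer
  have hex : ∃ k, k ≤ n ∧ ∀ m ≤ n, S k ≤ S m := by
    obtain ⟨k, hk, hkm⟩ := Finset.exists_min_image (range (n+1)) S ⟨0, by simp⟩
    exact ⟨k, Nat.lt_succ_iff.mp (by simpa using hk), fun m hm => hkm m (mem_range.mpr (by omega))⟩
  set t₀ := Nat.find hex with ht₀
  obtain ⟨ht₀n, hmin⟩ := Nat.find_spec hex
  rw [← ht₀] at ht₀n hmin
  have hlt : ∀ m < t₀, S t₀ + 1 ≤ S m := by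
    intro m hm
    have := Nat.find_min hex hm
    push_neg at this
    obtain ⟨m', hm', hSm'⟩ := this (by omega)
    have := hmin m' hm'
    omega
  have hGd : ∀ k ≤ n, S t₀ ≤ S (t₀ + k) := by
    intro k hk
    by_cases hle : t₀ + k ≤ n
    · exact hmin _ hle
    · have hm : t₀ + k = (t₀ + k - (n+1)) + (n+1) := by omega
      rw [hm, period]
      have h1 : t₀ + k - (n+1) < t₀ := by omega
      have := hlt _ h1
      omega
  refine ⟨(t₀ : ZMod (n+1)), ?_, ?_⟩
  · intro k hk
    rw [window t₀ k]
    have := hGd k hk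
    omega
  · intro t ht
    have hval : ((t.val : ℕ) : ZMod (n+1)) = t := ZMod.natCast_rightInverse t
    set t₁ := t.val with ht₁
    have ht₁n : t₁ ≤ n := Nat.lt_succ_iff.mp (ZMod.val_lt t)
    have hGd₁ : ∀ k ≤ n, S t₁ ≤ S (t₁ + k) := by
      intro k hk
      have := ht k hk
      rw [← hval, window t₁ k] at this
      omega
    have heq : t₁ = t₀ := by
      rcases lt_trichotomy t₁ t₀ with h | h | h
      · have h1 := hGd₁ (t₀ - t₁) (by omega)
        have h2 : t₁ + (t₀ - t₁) = t₀ := by omega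
        rw [h2] at h1
        have := hlt t₁ h
        omega
      · exact h
      · exfalso
        have hk : t₀ + (n+1) - t₁ ≤ n := by omega
        have h1 := hGd₁ (t₀ + (n+1) - t₁) hk
        have h2 : t₁ + (t₀ + (n+1) - t₁) = t₀ + (n+1) := by omega
        rw [h2, period] at h1
        have := hmin t₁ ht₁n
        omega
    rw [← hval, heq]



def Good (g : Fin n → ZMod (n+1)) : Prop :=
  ∀ k, 1 ≤ k → k ≤ n → k ≤ (univ.filter (fun i => 1 ≤ (g i).val ∧ (g i).val ≤ k)).card

lemma count_eq_sum (g : Fin n → ZMod (n+1)) (k : ℕ) (hk : k ≤ n) :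
    (univ.filter (fun i => 1 ≤ (g i).val ∧ (g i).val ≤ k)).card
      = ∑ j ∈ Icc 1 k, (univ.filter (fun i => g i = ((j : ℕ) : ZMod (n+1)))).card := by
  rw [Finset.card_eq_sum_card_fiberwise (f := fun i => (g i).val) (t := Icc 1 k)
      (fun i hi => by
        simp only [mem_coe, mem_filter] at hi
        exact mem_Icc.mpr ⟨hi.2.1, hi.2.2⟩)]
  apply Finset.sum_congr rfl
  intro j hj
  rw [mem_Icc] at hj
  congr 1
  ext i
  simp only [mem_filter, mem_univ, true_and]
  constructor
  · rintro ⟨⟨_, _⟩, h3⟩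
    rw [← h3]
    exact (ZMod.natCast_rightInverse (g i)).symm
  · intro h
    have hv : (g i).val = j := by
      rw [h]
      exact ZMod.val_cast_of_lt (by omega)
    exact ⟨⟨by omega, by omega⟩, hv⟩


lemma exists_unique_shift (f : Fin n → ZMod (n+1)) :
    ∃! c : ZMod (n+1), Good (fun i => f i + c) := by
  classical
  set y : ZMod (n+1) → ℤ := fun s => ((univ.filter (fun i => f i = s)).card : ℤ) with hy
  set u : ZMod (n+1) → ℤ := fun s => y s - 1 with hu
  have hsumy : ∑ s : ZMod (n+1), y s = n := by
    have h1 := Finset.card_eq_sum_card_fiberwise (f := f) (s := univ) (t := univ)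
      (fun i _ => mem_univ _)
    rw [card_univ, Fintype.card_fin] at h1
    rw [hy]
    push_cast
    exact_mod_cast h1.symm
  have hsum : ∑ s : ZMod (n+1), u s = -1 := by
    rw [hu]
    rw [Finset.sum_sub_distrib, hsumy]
    simp [Finset.card_univ, ZMod.card]
  obtain ⟨t, ht, hun⟩ := cycle_lemma u hsum
  have key : ∀ c : ZMod (n+1), Good (fun i => f i + c) ↔
      (∀ k ≤ n, 0 ≤ ∑ j ∈ range k, u ((1 - c) + (j : ℕ))) := by
    intro c
    have hcount : ∀ k, k ≤ n →
        ((univ.filter (fun i => 1 ≤ (f i + c).val ∧ (f i + c).val ≤ k)).card : ℤ)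
          = ∑ j ∈ range k, y ((1 - c) + (j : ℕ)) := by
      intro k hk
      rw [count_eq_sum (fun i => f i + c) k hk]
      push_cast
      rw [← Finset.Ico_add_one_right_eq_Icc, Finset.sum_Ico_eq_sum_range]
      simp only [Nat.add_sub_cancel_left, Nat.succ_sub_one, Nat.add_sub_cancel]
      apply Finset.sum_congr rfl
      intro j _
      rw [hy]
      norm_num
      congr 1
      ext i
      simp only [mem_filter, mem_univ, true_and]
      constructor
      · intro h
        push_cast at h ⊢
        linear_combination h
      · intro h
        push_cast at h ⊢
        linear_combination h
    constructor
    · intro hg k hk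
      rcases Nat.eq_zero_or_pos k with rfl | hpos
      · simp
      · have h1 := hg k hpos hk
        have h2 := hcount k hk
        have : (k : ℤ) ≤ ∑ j ∈ range k, y ((1 - c) + (j : ℕ)) := by
          rw [← h2]; exact_mod_cast h1
        rw [hu]
        simp only [Finset.sum_sub_distrib]
        simp only [Finset.sum_const, Finset.card_range, nsmul_eq_mul, mul_one]
        omega
    · intro hP k hpos hk
      have h1 := hP k hk
      rw [hu] at h1
      simp only [Finset.sum_sub_distrib, Finset.sum_const, Finset.card_range,
        nsmul_eq_mul, mul_one] at h1
      have h2 := hcount k hk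
      have : (k : ℤ) ≤ ((univ.filter
          (fun i => 1 ≤ (f i + c).val ∧ (f i + c).val ≤ k)).card : ℤ) := by
        rw [h2]; omega
      exact_mod_cast this
  refine ⟨1 - t, ?_, ?_⟩
  · refine (key (1 - t)).mpr ?_
    have h3 : (1 : ZMod (n+1)) - (1 - t) = t := by ring
    rw [h3]
    exact ht
  · intro c hc
    rw [key] at hc
    have := hun (1 - c) hc
    have h2 : c = 1 - (1 - c) := by ring
    rw [h2, this]


lemma good_pos {g : Fin n → ZMod (n+1)} (hg : Good g) (i : Fin n) : 1 ≤ (g i).val := by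
  have hn : 1 ≤ n := i.pos
  have h1 := hg n hn le_rfl
  have h2 : univ.filter (fun i => 1 ≤ (g i).val ∧ (g i).val ≤ n) = univ := by
    apply Finset.eq_univ_of_card
    have := Finset.card_filter_le (univ : Finset (Fin n))
      (fun i => 1 ≤ (g i).val ∧ (g i).val ≤ n)
    rw [card_univ, Fintype.card_fin] at this
    rw [Fintype.card_fin]
    omega
  have := (Finset.eq_univ_iff_forall.mp h2) i
  rw [mem_filter] at this
  exact this.2.1

lemma pf_le {a : Fin n → ℕ+} (ha : IsParkingFunction a) (i : Fin n) : (a i : ℕ) ≤ n := by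
  have hn : 1 ≤ n := i.pos
  have h1 := (pf_iff_count a).mp ha n hn le_rfl
  have h2 : univ.filter (fun i => (a i : ℕ) ≤ n) = univ := by
    apply Finset.eq_univ_of_card
    have := Finset.card_filter_le (univ : Finset (Fin n)) (fun i => (a i : ℕ) ≤ n)
    rw [card_univ, Fintype.card_fin] at this
    rw [Fintype.card_fin]
    omega
  have := (Finset.eq_univ_iff_forall.mp h2) i
  rw [mem_filter] at this
  exact this.2

noncomputable def pfEquivGood :
    {a : Fin n → ℕ+ // IsParkingFunction a} ≃ {g : Fin n → ZMod (n+1) // Good g} where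
  toFun := fun x => ⟨fun i => ((x.1 i : ℕ) : ZMod (n+1)), by
    intro k hk1 hkn
    have hcount := (pf_iff_count x.1).mp x.2 k hk1 hkn
    have hval : ∀ i, (((x.1 i : ℕ) : ZMod (n+1))).val = (x.1 i : ℕ) := fun i =>
      ZMod.val_cast_of_lt (by have := pf_le x.2 i; omega)
    have : univ.filter (fun i => 1 ≤ (((x.1 i : ℕ) : ZMod (n+1))).val ∧
        (((x.1 i : ℕ) : ZMod (n+1))).val ≤ k) = univ.filter (fun i => (x.1 i : ℕ) ≤ k) := by
      apply Finset.filter_congr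
      intro i _
      rw [hval i]
      have := (x.1 i).pos
      constructor
      · rintro ⟨_, h⟩; exact h
      · intro h; exact ⟨by omega, h⟩
    rw [this]
    exact hcount⟩
  invFun := fun x => ⟨fun i => ⟨(x.1 i).val, good_pos x.2 i⟩, by
    apply pf_of_count
    intro k hk1 hkn
    have hcount := x.2 k hk1 hkn
    simp only [PNat.mk_coe]
    refine le_trans hcount (Finset.card_le_card ?_)
    intro i hi
    simp only [mem_filter] at hi ⊢
    exact Finset.mem_filter.mpr ⟨mem_univ _, hi.2.2⟩⟩
  left_inv := by
    rintro ⟨a, ha⟩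
    apply Subtype.ext
    funext i
    apply PNat.coe_injective
    simp only [PNat.mk_coe]
    exact ZMod.val_cast_of_lt (by have := pf_le ha i; omega)
  right_inv := by
    rintro ⟨g, hg⟩
    apply Subtype.ext
    funext i
    simp only [PNat.mk_coe]
    exact ZMod.natCast_rightInverse (g i)

lemma card_good_mul :
    Nat.card {g : Fin n → ZMod (n+1) // Good g} * (n+1) = (n+1)^n := by
  classical
  have hbij : Function.Bijective
      (fun p : ZMod (n+1) × {g : Fin n → ZMod (n+1) // Good g} =>
        (fun i => p.2.1 i - p.1 : Fin n → ZMod (n+1))) := by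
    constructor
    · rintro ⟨c, g, hg⟩ ⟨c', g', hg'⟩ h
      simp only at h
      set f : Fin n → ZMod (n+1) := fun i => g i - c with hf
      have hgf : g = fun i => f i + c := by funext i; rw [hf]; ring
      have hgf' : g' = fun i => f i + c' := by
        funext i
        have : g' i - c' = f i := by rw [hf]; exact (congrFun h i).symm
        rw [← this]; ring
      obtain ⟨c₀, hc₀, hun⟩ := exists_unique_shift f
      have hc : c = c' := by
        rw [hun c (by show Good fun i => f i + c; rw [← hgf]; exact hg),
          hun c' (by show Good fun i => f i + c'; rw [← hgf']; exact hg')]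
      subst hc
      have : g = g' := by
        funext i
        have := congrFun h i
        exact sub_left_injective this
      simp [this]
    · intro f
      obtain ⟨c, hc, -⟩ := exists_unique_shift f
      refine ⟨⟨c, ⟨fun i => f i + c, hc⟩⟩, ?_⟩
      funext i
      simp
  have := Nat.card_congr (Equiv.ofBijective _ hbij)
  rw [Nat.card_prod] at this
  have h1 : Nat.card (ZMod (n+1)) = n + 1 := Nat.card_zmod _
  have h2 : Nat.card (Fin n → ZMod (n+1)) = (n+1)^n := by
    rw [Nat.card_fun, Nat.card_zmod, Nat.card_eq_fintype_card, Fintype.card_fin]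
  rw [h1, h2] at this
  rw [mul_comm]
  exact this

end ParkingProof

theorem card_parkingFunctions (n : ℕ) :
    Nat.card {a : Fin n → ℕ+ // IsParkingFunction a} = (n + 1) ^ (n - 1) := by
  have h1 := Nat.card_congr (ParkingProof.pfEquivGood (n := n))
  have h2 := ParkingProof.card_good_mul (n := n)
  rw [h1]
  have h3 : (n+1)^n = (n+1)^(n-1) * (n+1) := by
    cases n with
    | zero => simp
    | succ m => rw [Nat.succ_sub_one, ← pow_succ]
  rw [h3] at h2
  exact Nat.eq_of_mul_eq_mul_right (by omega) h2
end

section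
/- Over ℚ, the formal power series F(t) = t(1-t)/(1+t) (expanded as t(1-t)·(1+t)^{-1}) has compositional inverse G(t) = (1 - t - √(1-6t+t²))/2, i.e., F(G(t)) = t, where √(1-6t+t²) denotes the unique power series with constant term 1 whose square is 1-6t+t². -/
open PowerSeries

/-- Over `ℚ`, `F(t) = t(1-t)/(1+t)` has compositional inverse
`G(t) = (1 - t - √(1-6t+t²))/2`, i.e. `F(G(t)) = t`:
substituting `G` into `F` gives `G·(1-G)·(1+G)⁻¹ = t`.  Here `s` is the unique
power series with constant term 1 whose square is `1 - 6t + t²`. -/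
theorem statement2 (s : PowerSeries ℚ)
    (hs0 : constantCoeff s = 1) (hs : s ^ 2 = 1 - 6 * X + X ^ 2)
    (G : PowerSeries ℚ) (hG : G = C (1/2 : ℚ) * (1 - X - s)) :
    G * (1 - G) * (1 + G)⁻¹ = X := by
  have h2 : (C (1/2 : ℚ)) * 2 = 1 := by
    rw [show (2 : PowerSeries ℚ) = C (2 : ℚ) from (map_ofNat (C (R := ℚ)) 2).symm, ← map_mul]
    norm_num
  have hsG : s = 1 - X - 2 * G := by
    rw [hG]
    linear_combination (1 - X - s) * h2
  have hs' : (1 - X - 2 * G) ^ 2 = 1 - 6 * X + X ^ 2 := by rw [← hsG]; exact hs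
  have key4 : 4 * (G * (1 - G)) = 4 * (X * (1 + G)) := by linear_combination -hs'
  have h4 : (4 : PowerSeries ℚ) ≠ 0 := by
    intro h
    have := congrArg (constantCoeff (R := ℚ)) h
    rw [map_ofNat, map_zero] at this
    norm_num at this
  have key : G * (1 - G) = X * (1 + G) := mul_left_cancel₀ h4 key4
  have hc : constantCoeff (1 + G) ≠ 0 := by
    simp [hG, hs0]
  rw [key, mul_assoc, PowerSeries.mul_inv_cancel _ hc, mul_one]
end

section
/- Over ℚ, the formal power series f(t) = t(2t + √(1+4t²)) has compositional inverse t/√(1+4t), i.e., substituting t/√(1+4t) into f yields t. -/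
open PowerSeries

/-- Over `ℚ`, the power series `f(t) = t(2t + √(1+4t²))` has compositional
inverse `g = t/√(1+4t)`, i.e. substituting `g` into `f` yields `t`:
`g·(2g + √(1+4g²)) = t`.  Here `s₁` is the square root of `1+4t` and `s₂` is
the square root of `1+4g²` (both with constant term 1). -/
theorem statement3 (s₁ s₂ g : PowerSeries ℚ)
    (hs₁0 : constantCoeff s₁ = 1) (hs₁ : s₁ ^ 2 = 1 + 4 * X)
    (hg : g = X * s₁⁻¹)
    (hs₂0 : constantCoeff s₂ = 1) (hs₂ : s₂ ^ 2 = 1 + 4 * g ^ 2) :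
    g * (2 * g + s₂) = X := by
  have h0 : constantCoeff s₁ ≠ 0 := by rw [hs₁0]; norm_num
  have hiu : s₁⁻¹ * s₁ = 1 := PowerSeries.inv_mul_cancel s₁ h0
  have hgs : g * s₁ = X := by
    rw [hg, mul_assoc, hiu, mul_one]
  have hsq : (s₂ * s₁) ^ 2 = (1 + 2 * X) ^ 2 := by
    have : (s₂ * s₁) ^ 2 = s₂ ^ 2 * s₁ ^ 2 := by ring
    rw [this, hs₂, add_mul, one_mul, hs₁, show (4 : ℚ⟦X⟧) * g ^ 2 * (1 + 4 * X)
        = 4 * (g * s₁) ^ 2 by rw [← hs₁]; ring, hgs]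
    ring
  have hfac : (s₂ * s₁ - (1 + 2 * X)) * (s₂ * s₁ + (1 + 2 * X)) = 0 := by
    have := sub_eq_zero.mpr hsq
    linear_combination this
  have hne : s₂ * s₁ + (1 + 2 * X) ≠ 0 := by
    intro h
    have := congrArg constantCoeff h
    simp [hs₁0, hs₂0] at this
  have hkey : s₂ * s₁ = 1 + 2 * X := by
    rcases mul_eq_zero.mp hfac with h | h
    · exact sub_eq_zero.mp h
    · exact absurd h hne
  have hs₁ne : s₁ ≠ 0 := fun h => h0 (by rw [h]; simp)
  have : g * (2 * g + s₂) * s₁ ^ 2 = X * s₁ ^ 2 := by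
    calc g * (2 * g + s₂) * s₁ ^ 2 = 2 * (g * s₁) ^ 2 + (g * s₁) * (s₂ * s₁) := by ring
    _ = X * s₁ ^ 2 := by rw [hgs, hkey, hs₁]; ring
  exact mul_right_cancel₀ (pow_ne_zero 2 hs₁ne) this
end

section
/- For every n ≥ 0 and k ≥ 1, the coefficient of z^k in the formal power series (2z + √(1+4z²))^(n+1) over ℚ equals (n+1)·g_k(n)/k!, where g_k(n) = 2^k · (n+k-1)(n+k-3)(n+k-5)···(n-k+3), a product of k-1 factors decreasing by 2; the constant term (k=0 coefficient) is 1. -/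
open PowerSeries

/-- `g_k(n) = 2^k·(n+k-1)(n+k-3)⋯(n-k+3)`, a product of `k-1` factors
decreasing by 2. -/
noncomputable def gkn (k n : ℕ) : ℚ :=
  2 ^ k * ∏ j ∈ Finset.range (k - 1), ((n : ℚ) + k - 1 - 2 * j)

private lemma gkn_one (n : ℕ) : gkn 1 n = 2 := by simp [gkn]

private lemma gkn_two (n : ℕ) : gkn 2 n = 4 * ((n : ℚ) + 1) := by
  simp [gkn, Finset.prod_range_one]; ring

private lemma gkn_step (k n : ℕ) (hk : 1 ≤ k) :
    gkn (k + 2) n = 4 * ((n : ℚ) + 1 + k) * ((n : ℚ) + 1 - k) * gkn k n := by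
  obtain ⟨j, rfl⟩ : ∃ j, k = j + 1 := ⟨k - 1, by omega⟩
  unfold gkn
  have e1 : j + 1 + 2 - 1 = j + 2 := rfl
  have e2 : j + 1 - 1 = j := rfl
  rw [e1, e2, Finset.prod_range_succ, Finset.prod_range_succ']
  have hprod : ∏ i ∈ Finset.range j, ((n:ℚ) + ↑(j+1+2) - 1 - 2 * ↑(i+1))
      = ∏ i ∈ Finset.range j, ((n:ℚ) + ↑(j+1) - 1 - 2 * ↑i) :=
    Finset.prod_congr rfl (fun i _ => by push_cast; ring)
  rw [hprod]
  push_cast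
  ring

/-- For `n ≥ 0` and `k ≥ 1`, the coefficient of `z^k` in `(2z+√(1+4z²))^(n+1)`
over `ℚ` equals `(n+1)·g_k(n)/k!`, and the constant term is 1.  Here `s` is
the unique power series with constant term 1 whose square is `1+4z²`. -/
theorem statement4 (s : PowerSeries ℚ)
    (hs0 : constantCoeff s = 1) (hs : s ^ 2 = 1 + 4 * X ^ 2) (n : ℕ) :
    (∀ k : ℕ, 1 ≤ k →
      coeff k ((2 * X + s) ^ (n + 1)) = (n + 1) * gkn k n / (k.factorial : ℚ))
    ∧ coeff 0 ((2 * X + s) ^ (n + 1)) = 1 := by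
  have h4 : (d⁄dX ℚ) (4:ℚ⟦X⟧) = 0 := by
    rw [show (4:ℚ⟦X⟧) = ((4:ℕ):ℚ⟦X⟧) by norm_num]; exact Derivation.map_natCast _ 4
  have h2 : (d⁄dX ℚ) (2:ℚ⟦X⟧) = 0 := by
    rw [show (2:ℚ⟦X⟧) = ((2:ℕ):ℚ⟦X⟧) by norm_num]; exact Derivation.map_natCast _ 2
  have h2ne : (2:ℚ⟦X⟧) ≠ 0 := fun h => by
    have := congrArg (constantCoeff) h; rw [map_ofNat] at this; norm_num at this
  have hss : s * d⁄dX ℚ s = 4 * X := by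
    have h := congrArg (d⁄dX ℚ) hs
    simp only [Derivation.leibniz_pow, map_add, Derivation.map_one_eq_zero, Derivation.leibniz,
      derivative_X, smul_eq_mul, nsmul_eq_mul, pow_one, mul_one, mul_zero, add_zero, zero_add,
      Nat.cast_ofNat, h4] at h
    refine mul_left_cancel₀ h2ne ?_
    linear_combination h
  set f : ℚ⟦X⟧ := 2 * X + s with hf
  have hDf : d⁄dX ℚ f = 2 + d⁄dX ℚ s := by
    rw [hf, map_add]
    congr 1
    rw [Derivation.leibniz, derivative_X, h2]
    simp [smul_eq_mul]
  have hsf : s * d⁄dX ℚ f = 2 * f := by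
    rw [hDf, hf]; linear_combination hss
  set y : ℚ⟦X⟧ := f ^ (n + 1) with hy
  have hDy : d⁄dX ℚ y = ((n:ℚ⟦X⟧) + 1) * f ^ n * d⁄dX ℚ f := by
    rw [hy, Derivation.leibniz_pow]
    simp only [smul_eq_mul, nsmul_eq_mul, Nat.add_sub_cancel]
    push_cast
    ring
  have hsy : s * d⁄dX ℚ y = C (2 * ((n:ℚ) + 1)) * y := by
    rw [hDy, hy]
    have : C (2 * ((n:ℚ) + 1)) = 2 * ((n:ℚ⟦X⟧) + 1) := by
      rw [map_mul, map_add, map_one, map_ofNat, map_natCast]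
    rw [this]
    linear_combination ((n:ℚ⟦X⟧) + 1) * f ^ n * hsf
  have hcn : (d⁄dX ℚ) (C (2 * ((n:ℚ) + 1))) = 0 := derivative_C (r := _)
  have hODE : d⁄dX ℚ (d⁄dX ℚ y) + C 4 * (X ^ 2 * d⁄dX ℚ (d⁄dX ℚ y))
      + C 4 * (X * d⁄dX ℚ y) = C (4 * ((n:ℚ) + 1) ^ 2) * y := by
    have h := congrArg (d⁄dX ℚ) hsy
    rw [Derivation.leibniz, Derivation.leibniz, hcn] at h
    simp only [smul_eq_mul, mul_zero, add_zero] at h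
    have e4 : C (4:ℚ) = (4:ℚ⟦X⟧) := map_ofNat _ 4
    have eN : C (4 * ((n:ℚ) + 1) ^ 2) = 4 * ((n:ℚ⟦X⟧) + 1) ^ 2 := by
      rw [map_mul, map_pow, map_add, map_one, map_ofNat, map_natCast]
    have eM : C (2 * ((n:ℚ) + 1)) = 2 * ((n:ℚ⟦X⟧) + 1) := by
      rw [map_mul, map_add, map_one, map_ofNat, map_natCast]
    rw [e4, eN]
    rw [eM] at h hsy
    linear_combination s * h - (d⁄dX ℚ (d⁄dX ℚ y)) * hs - (d⁄dX ℚ y) * hss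
      + (2 * ((n:ℚ⟦X⟧) + 1)) * hsy
  have hXg : ∀ (g : ℚ⟦X⟧) (k : ℕ), coeff k (X * g)
      = if 1 ≤ k then coeff (k-1) g else 0 := by
    intro g k
    rw [show (X:ℚ⟦X⟧) * g = X ^ 1 * g by rw [pow_one], coeff_X_pow_mul']
  have hX2g : ∀ (g : ℚ⟦X⟧) (k : ℕ), coeff k (X ^ 2 * g)
      = if 2 ≤ k then coeff (k-2) g else 0 := fun g k => coeff_X_pow_mul' g 2 k
  have hrec : ∀ k : ℕ, ((k:ℚ)+1) * ((k:ℚ)+2) * coeff (k+2) y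
      = (4*((n:ℚ)+1)^2 - 4*(k:ℚ)^2) * coeff k y := by
    intro k
    match k with
    | 0 =>
      have h := congrArg (coeff 0) hODE
      rw [map_add, map_add, coeff_C_mul, coeff_C_mul, coeff_C_mul, hXg, hX2g,
        if_neg (by omega), if_neg (by omega)] at h
      simp only [coeff_derivative] at h
      norm_num at h ⊢
      linear_combination h
    | 1 =>
      have h := congrArg (coeff 1) hODE
      rw [map_add, map_add, coeff_C_mul, coeff_C_mul, coeff_C_mul, hXg, hX2g,
        if_neg (by omega), if_pos (by omega)] at h
      simp only [coeff_derivative] at h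
      norm_num at h ⊢
      linear_combination h
    | (j+2) =>
      have h := congrArg (coeff (j+2)) hODE
      rw [map_add, map_add, coeff_C_mul, coeff_C_mul, coeff_C_mul, hXg, hX2g,
        if_pos (by omega), if_pos (by omega), show j+2-1 = j+1 by omega,
        show j+2-2 = j by omega] at h
      simp only [coeff_derivative] at h
      rw [show j+2+1+1 = j+2+2 by omega, show j+1+1 = j+2 by omega] at h
      push_cast at h ⊢
      linear_combination h
  have ha0 : coeff 0 y = 1 := by
    rw [hy, hf, coeff_zero_eq_constantCoeff_apply, map_pow, map_add, map_mul, constantCoeff_X,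
      hs0]
    norm_num
  have ha1 : coeff 1 y = 2 * ((n:ℚ) + 1) := by
    have h := congrArg (coeff 0) hsy
    rw [coeff_C_mul, coeff_zero_eq_constantCoeff_apply, coeff_zero_eq_constantCoeff_apply,
      map_mul, hs0, one_mul, ← coeff_zero_eq_constantCoeff_apply, coeff_derivative,
      ← coeff_zero_eq_constantCoeff_apply, ha0, mul_one] at h
    norm_num at h
    linarith [h]
  have key : ∀ k : ℕ, coeff k y
      = if k = 0 then 1 else ((n:ℚ) + 1) * gkn k n / (k.factorial : ℚ) := by
    intro k
    induction k using Nat.twoStepInduction with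
    | zero => simpa using ha0
    | one =>
      rw [if_neg one_ne_zero, gkn_one, ha1]
      norm_num
      ring
    | more k ih _ =>
      rw [if_neg (by omega)]
      have h := hrec k
      have hk12 : ((k:ℚ)+1) * ((k:ℚ)+2) ≠ 0 := by positivity
      rcases Nat.eq_zero_or_pos k with rfl | hk
      · rw [ha0, mul_one] at h
        norm_num at h ⊢
        rw [gkn_two]
        norm_num [Nat.factorial]
        linear_combination h / 2
      · rw [ih, if_neg (by omega)] at h
        rw [gkn_step k n hk]
        have hfac : (((k+2).factorial : ℕ) : ℚ)
            = ((k:ℚ)+2) * ((k:ℚ)+1) * (k.factorial : ℚ) := by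
          rw [Nat.factorial_succ, Nat.factorial_succ]
          push_cast
          ring
        have hkf : (k.factorial : ℚ) ≠ 0 := Nat.cast_ne_zero.mpr k.factorial_ne_zero
        rw [hfac]
        field_simp at h ⊢
        linear_combination h
  constructor
  · intro k hk
    have := key k
    rw [if_neg (by omega)] at this
    rw [this]
  · exact ha0
end

section
/- In ℚ[[z]], (-1 + √(1+4z²))/2 = Σ_{k≥0} (-1)^k C_k z^{2k+2}, where C_k = (1/(k+1))·binom(2k,k) is the k-th Catalan number. (Equivalently, the series (−1+√(1+4z²))/2 equals Σ_{k≥1} (−1)^{k−1} C_{k−1} z^{2k}.) -/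
open PowerSeries

private noncomputable def catf (m : ℕ) : ℚ :=
  if Even m ∧ 2 ≤ m then (-1 : ℚ) ^ (m / 2 - 1) * catalan (m / 2 - 1) else 0

private lemma catf_zero {m : ℕ} (h : ¬(Even m ∧ 2 ≤ m)) : catf m = 0 := if_neg h

private lemma catf_eval (a : ℕ) : catf (2 * a + 2) = (-1 : ℚ) ^ a * catalan a := by
  have h1 : Even (2 * a + 2) := ⟨a + 1, by ring⟩
  have h2 : (2 * a + 2) / 2 - 1 = a := by omega
  simp [catf, h1, h2]

private lemma coeff_TT (m : ℕ) :
    (coeff m) (PowerSeries.mk catf * PowerSeries.mk catf) =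
      if Even m ∧ 4 ≤ m then (-1 : ℚ) ^ (m / 2) * catalan (m / 2 - 1) else 0 := by
  rw [coeff_mul, Finset.Nat.sum_antidiagonal_eq_sum_range_succ_mk]
  simp only [coeff_mk]
  by_cases h : Even m ∧ 4 ≤ m
  · obtain ⟨⟨n, hn⟩, h4⟩ := h
    have hm : m = 2 * n := by omega
    subst hm
    have hn2 : 2 ≤ n := by omega
    have him : ∀ a ∈ Finset.range (n - 1), 2 * a + 2 ∈ Finset.range (2 * n + 1) := by
      intro a ha; simp only [Finset.mem_range] at *; omega
    have hinj : ∀ a ∈ Finset.range (n - 1), ∀ b ∈ Finset.range (n - 1),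
        2 * a + 2 = 2 * b + 2 → a = b := by
      intro a _ b _ hab; omega
    have hsum : ∑ k ∈ Finset.range (2 * n + 1), catf k * catf (2 * n - k)
        = ∑ a ∈ Finset.range (n - 1), catf (2 * a + 2) * catf (2 * n - (2 * a + 2)) := by
      rw [← Finset.sum_image (f := fun k => catf k * catf (2 * n - k)) (g := fun a => 2 * a + 2) hinj]
      refine (Finset.sum_subset ?_ ?_).symm
      · intro k hk
        simp only [Finset.mem_image, Finset.mem_range] at hk ⊢
        obtain ⟨a, ha, rfl⟩ := hk; omega
      · intro k hk hk'
        simp only [Finset.mem_image, Finset.mem_range] at hk hk'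
        by_cases he : Even k
        · obtain ⟨b, hb⟩ := he
          by_cases hb0 : 1 ≤ b ∧ b ≤ n - 1
          · refine absurd ?_ hk'
            refine ⟨b - 1, by omega, ?_⟩
            show 2 * (b - 1) + 2 = k
            omega
          · -- b = 0 or b ≥ n; in either case a factor is catf 0 = 0 or catf of <2
            by_cases hb1 : b = 0
            · rw [catf_zero (m := k) (by rintro ⟨-, h⟩; omega)]; ring
            · have h0 : 2 * n - k = 0 := by omega
              rw [h0, catf_zero (m := 0) (by rintro ⟨-, h⟩; omega)]; ring
        · rw [catf_zero (fun hc => he hc.1)]; ring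
    rw [hsum]
    have hterm : ∀ a ∈ Finset.range (n - 1),
        catf (2 * a + 2) * catf (2 * n - (2 * a + 2))
          = (-1 : ℚ) ^ n * (catalan a * catalan (n - 2 - a)) := by
      intro a ha
      simp only [Finset.mem_range] at ha
      have h2 : 2 * n - (2 * a + 2) = 2 * (n - 2 - a) + 2 := by omega
      rw [h2, catf_eval, catf_eval]
      have hpow : (-1 : ℚ) ^ a * (-1 : ℚ) ^ (n - 2 - a) = (-1 : ℚ) ^ n := by
        rw [← pow_add]
        have : a + (n - 2 - a) = n - 2 := by omega
        rw [this]
        have hn' : n = (n - 2) + 2 := by omega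
        rw [hn', pow_add]; norm_num
      calc (-1:ℚ) ^ a * catalan a * ((-1:ℚ) ^ (n - 2 - a) * catalan (n - 2 - a))
          = ((-1:ℚ) ^ a * (-1:ℚ) ^ (n - 2 - a)) * (catalan a * catalan (n - 2 - a)) := by ring
        _ = (-1 : ℚ) ^ n * (catalan a * catalan (n - 2 - a)) := by rw [hpow]
    rw [Finset.sum_congr rfl hterm, ← Finset.mul_sum]
    have hcat : catalan (n - 1) = ∑ a ∈ Finset.range (n - 1), catalan a * catalan (n - 2 - a) := by
      have h1 : n - 1 = n - 2 + 1 := by omega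
      rw [h1, catalan_succ]
      exact Fin.sum_univ_eq_sum_range (fun j => catalan j * catalan (n - 2 - j)) (n - 2 + 1)
    have h1 : Even (2 * n) := ⟨n, by ring⟩
    have h2 : 2 * n / 2 = n := by omega
    rw [if_pos ⟨h1, by omega⟩, h2, hcat]
    push_cast
    rw [Finset.mul_sum]
  · rw [if_neg h]
    apply Finset.sum_eq_zero
    intro k hk
    simp only [Finset.mem_range] at hk
    by_cases h1 : Even k ∧ 2 ≤ k
    · by_cases h2 : Even (m - k) ∧ 2 ≤ m - k
      · exfalso
        obtain ⟨⟨a, ha⟩, h1b⟩ := h1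
        obtain ⟨⟨b, hb⟩, h2b⟩ := h2
        exact h ⟨⟨a + b, by omega⟩, by omega⟩
      · rw [catf_zero h2]; ring
    · rw [catf_zero h1]; ring

/-- In `ℚ[[z]]`, `(-1 + √(1+4z²))/2 = Σ_{k≥1} (-1)^(k-1) C_(k-1) z^(2k)`,
where `C_k` is the `k`-th Catalan number and `s = √(1+4z²)` is the unique
power series with constant term 1 squaring to `1+4z²`. -/
theorem statement6 (s : PowerSeries ℚ)
    (hs0 : constantCoeff s = 1) (hs : s ^ 2 = 1 + 4 * X ^ 2) :
    C (1/2 : ℚ) * (-1 + s) =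
      PowerSeries.mk (fun m =>
        if Even m ∧ 2 ≤ m then (-1 : ℚ) ^ (m / 2 - 1) * catalan (m / 2 - 1)
        else 0) := by
  show C (1/2 : ℚ) * (-1 + s) = PowerSeries.mk catf
  set T := PowerSeries.mk catf with hT
  have h2 : T + T * T = X ^ 2 := by
    ext m
    rw [map_add, coeff_TT, hT, coeff_mk, PowerSeries.coeff_X_pow]
    by_cases hm : Even m ∧ 4 ≤ m
    · have hne : ¬ m = 2 := by omega
      rw [if_pos hm, if_neg hne]
      have hc : catf m = (-1 : ℚ) ^ (m / 2 - 1) * catalan (m / 2 - 1) :=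
        if_pos ⟨hm.1, by omega⟩
      obtain ⟨k, hk⟩ : ∃ k, m / 2 = k + 1 := ⟨m / 2 - 1, by omega⟩
      rw [hc, hk]
      simp [pow_succ]
    · by_cases hm2 : m = 2
      · subst hm2
        have hf : catf 2 = 1 := by
          have h := catf_eval 0
          norm_num at h
          exact h
        rw [if_neg (by omega), if_pos rfl, hf]
        norm_num
      · rw [if_neg hm, if_neg hm2]
        rw [catf_zero (by rintro ⟨⟨a, ha⟩, h2'⟩; exact hm ⟨⟨a, ha⟩, by omega⟩)]
        ring
  have key : (1 + 2 * T) ^ 2 = 1 + 4 * X ^ 2 := by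
    linear_combination (4 : ℚ⟦X⟧) * h2
  have hmul : (s - (1 + 2 * T)) * (s + (1 + 2 * T)) = 0 := by
    linear_combination hs - key
  have hne : s + (1 + 2 * T) ≠ 0 := by
    intro hzero
    have := congrArg constantCoeff hzero
    have hT0 : constantCoeff T = 0 := by
      rw [hT]
      show catf 0 = 0
      exact catf_zero (by rintro ⟨-, h⟩; omega)
    simp [hs0, hT0] at this
  have hsub : s - (1 + 2 * T) = 0 := by
    rcases mul_eq_zero.mp hmul with h | h
    · exact h
    · exact absurd h hne
  have hs' : s = 1 + 2 * T := by
    have := sub_eq_zero.mp hsub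
    exact this
  rw [hs']
  have hone : (C (1/2 : ℚ)) * 2 = 1 := by
    rw [show (2 : ℚ⟦X⟧) = C (2 : ℚ) from (map_ofNat C 2).symm, ← map_mul]
    norm_num
  calc C (1/2 : ℚ) * (-1 + (1 + 2 * T)) = (C (1/2 : ℚ) * 2) * T := by ring
    _ = T := by rw [hone, one_mul]
end

section
/- For all n ≥ 1, the coefficient of t^n in the formal power series ((1+t)/(1-t))^(n+1) over ℚ equals (n+1)·r_n, where r_n is the n-th large Schröder number defined by Σ_{n≥0} r_n t^{n+1} = (1 - t - √(1-6t+t²))/2. -/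
open PowerSeries

noncomputable def Iq : PowerSeries ℚ := (1 - X)⁻¹
noncomputable def Jq : PowerSeries ℚ := (1 + X)⁻¹
noncomputable def Phiq : PowerSeries ℚ := (1 + X) * Iq

lemma hIq : (1 - X) * Iq = 1 := by
  apply PowerSeries.mul_inv_cancel
  simp

lemma hJq : (1 + X) * Jq = 1 := by
  apply PowerSeries.mul_inv_cancel
  simp

lemma hDIq : (d⁄dX ℚ) Iq = Iq * Iq := by
  have h := congrArg (d⁄dX ℚ) hIq
  simp only [Derivation.leibniz, smul_eq_mul, map_sub, map_one, Derivation.map_one_eq_zero,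
    derivative_X, map_one] at h
  have h2 : (1 - X) * (d⁄dX ℚ) Iq = Iq := by linear_combination h
  calc (d⁄dX ℚ) Iq = ((1-X)*Iq) * (d⁄dX ℚ) Iq := by rw [hIq, one_mul]
    _ = Iq * ((1-X) * (d⁄dX ℚ) Iq) := by ring
    _ = Iq * Iq := by rw [h2]

lemma hDPhiq : (d⁄dX ℚ) Phiq = 2 * (Iq * Iq) := by
  have : Phiq = (1 + X) * Iq := rfl
  rw [this]
  rw [Derivation.leibniz]
  simp only [smul_eq_mul, map_add, Derivation.map_one_eq_zero, derivative_X, hDIq, zero_add]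
  linear_combination (-Iq) * hIq

lemma a0val : coeff (R := ℚ) 0 (Phiq ^ 1) = 1 := by
  have h0 : constantCoeff (R := ℚ) Iq = 1 := by
    have := congrArg (constantCoeff (R := ℚ)) hIq
    simp at this
    simpa using this
  simp [Phiq, coeff_zero_eq_constantCoeff, map_mul, h0]

lemma a1val : coeff (R := ℚ) 1 (Phiq ^ 2) = 4 := by
  set K : PowerSeries ℚ := Iq * Iq with hK
  have hKrec : K = 1 + X * K + X * K - X * (X * K) := by
    rw [hK]; linear_combination ((1-X)*Iq + 1) * hIq
  have k0 : coeff (R := ℚ) 0 K = 1 := by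
    rw [hKrec]
    simp [coeff_zero_X_mul]
  have k1 : coeff (R := ℚ) 1 K = 2 := by
    conv_lhs => rw [hKrec]
    simp only [map_sub, map_add]
    simp [coeff_succ_X_mul, coeff_zero_X_mul, k0]
    norm_num
  have hphi2 : Phiq ^ 2 = K + X * K + X * K + X * (X * K) := by
    rw [hK]; show ((1+X)*Iq)^2 = _; ring
  rw [hphi2]
  simp only [map_add]
  simp [coeff_succ_X_mul, coeff_zero_X_mul, k0, k1]
  norm_num

lemma Fside (s : PowerSeries ℚ) (hs0 : constantCoeff (R := ℚ) s = 1) (hs : s ^ 2 = 1 - 6 * X + X ^ 2) :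
    coeff (R := ℚ) 1 (C (R := ℚ) (1/2) * (1 - X - s)) = 1 ∧
    coeff (R := ℚ) 2 (C (R := ℚ) (1/2) * (1 - X - s)) = 2 ∧
    ∀ m : ℕ, ((m:ℚ)+3) * coeff (R := ℚ) (m+3) (C (R := ℚ) (1/2) * (1 - X - s))
      = 3*(2*(m:ℚ)+3) * coeff (R := ℚ) (m+2) (C (R := ℚ) (1/2) * (1 - X - s))
        - (m:ℚ) * coeff (R := ℚ) (m+1) (C (R := ℚ) (1/2) * (1 - X - s)) := by
  set c : PowerSeries ℚ := C (R := ℚ) (1/2) with hcdef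
  have hc : 2 * c = 1 := by
    rw [hcdef, ← map_ofNat (C (R := ℚ)) 2, ← map_mul]; norm_num
  set F : PowerSeries ℚ := c * (1 - X - s) with hFdef
  have hF2 : F * F = (1 - X) * F - X := by
    rw [hFdef]
    linear_combination (c^2) * hs + (c*(1 - 4*X - s + X^2 + s*X) - X) * hc
  have hD : 2*(F * (d⁄dX ℚ) F) = (1-X) * (d⁄dX ℚ) F - F - 1 := by
    have h := congrArg (d⁄dX ℚ) hF2
    simp only [Derivation.leibniz, smul_eq_mul, map_sub, Derivation.map_one_eq_zero,
      derivative_X] at h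
    linear_combination h
  have hODE : (d⁄dX ℚ) F = 1 + X + X*F + C (R := ℚ) 6 * (X * (d⁄dX ℚ) F) - C (R := ℚ) 3 * F
      - X*(X* (d⁄dX ℚ) F) := by
    simp only [map_ofNat]
    linear_combination (-2 - 4*((d⁄dX ℚ) F))*hF2 + (-(1-X-2*F))*hD
  have f0 : coeff (R := ℚ) 0 F = 0 := by
    rw [hFdef, hcdef]
    simp [coeff_zero_eq_constantCoeff, map_mul, map_sub, hs0]
  have f1 : coeff (R := ℚ) 1 F = 1 := by
    have h := congrArg (coeff (R := ℚ) 0) hODE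
    simp only [map_sub, map_add, coeff_C_mul, coeff_zero_X_mul, coeff_derivative,
      f0] at h
    simpa using h
  have f2 : coeff (R := ℚ) 2 F = 2 := by
    have h := congrArg (coeff (R := ℚ) 1) hODE
    simp only [map_sub, map_add, coeff_C_mul, coeff_succ_X_mul, coeff_zero_X_mul,
      coeff_derivative, f0, f1] at h
    simp at h
    linarith
  refine ⟨f1, f2, fun m => ?_⟩
  have h := congrArg (coeff (R := ℚ) (m+2)) hODE
  simp only [map_sub, map_add, coeff_C_mul, coeff_succ_X_mul, coeff_derivative] at h
  have hX : coeff (R := ℚ) (m+2) (X : PowerSeries ℚ) = 0 := by simp [coeff_X]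
  have h1 : coeff (R := ℚ) (m+2) (1 : PowerSeries ℚ) = 0 := by simp
  rw [hX, h1] at h
  push_cast at h ⊢
  linear_combination h

lemma Phiq_def : Phiq = (1 + X) * Iq := rfl

set_option maxHeartbeats 3000000 in
lemma arec (m : ℕ) :
    (((m:ℚ)+1)*((m:ℚ)+2)) * coeff (R := ℚ) (m+2) (Phiq^(m+3))
      = (3*((m:ℚ)+1)*(2*(m:ℚ)+3)) * coeff (R := ℚ) (m+1) (Phiq^(m+2))
        - (((m:ℚ)+1)*((m:ℚ)+1)-1) * coeff (R := ℚ) m (Phiq^(m+1)) := by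
  set q2 : ℚ := ((m:ℚ)+1)*((m:ℚ)+2) with hq2
  set q1 : ℚ := 3*((m:ℚ)+1)*(2*(m:ℚ)+3) with hq1
  set q0 : ℚ := ((m:ℚ)+1)*((m:ℚ)+1)-1 with hq0
  set q3 : ℚ := (m:ℚ)+2 with hq3
  set ν : PowerSeries ℚ := C (R := ℚ) ((m:ℚ)+1) with hν
  have hDν : (d⁄dX ℚ) ν = 0 := by rw [hν]; exact derivative_C
  have hD2 : (d⁄dX ℚ) (2:PowerSeries ℚ) = 0 := by
    rw [show (2:PowerSeries ℚ) = C (R := ℚ) 2 from (map_ofNat _ _).symm]; exact derivative_C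
  have hD3 : (d⁄dX ℚ) (3:PowerSeries ℚ) = 0 := by
    rw [show (3:PowerSeries ℚ) = C (R := ℚ) 3 from (map_ofNat _ _).symm]; exact derivative_C
  have hD4 : (d⁄dX ℚ) (4:PowerSeries ℚ) = 0 := by
    rw [show (4:PowerSeries ℚ) = C (R := ℚ) 4 from (map_ofNat _ _).symm]; exact derivative_C
  have hPhiJ : Phiq * ((1-X)*Jq) = 1 := by
    have h : Phiq * ((1-X)*Jq) = ((1-X)*Iq) * ((1+X)*Jq) := by rw [Phiq_def]; ring
    rw [h, hIq, hJq, one_mul]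
  have hBm : Phiq^(m+1) * ((1-X)*Jq) = Phiq^m := by
    rw [pow_succ, mul_assoc, hPhiJ, mul_one]
  have hcast : ((m+1 : ℕ) : PowerSeries ℚ) = ν := by
    rw [hν, ← map_natCast (C (R := ℚ)) (m+1)]
    norm_num
  have hDB : (d⁄dX ℚ) (Phiq^(m+1)) = ν * ((Phiq^(m+1) * ((1-X)*Jq)) * (2*(Iq*Iq))) := by
    rw [Derivation.leibniz_pow, Nat.add_sub_cancel, hDPhiq, hBm]
    simp only [smul_eq_mul, nsmul_eq_mul, hcast]
  have hDK : (d⁄dX ℚ) (Iq*Iq) = 2*(Iq*(Iq*Iq)) := by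
    rw [Derivation.leibniz, hDIq]
    simp only [smul_eq_mul]; ring
  have hDN : (d⁄dX ℚ) (-ν + (2*ν-1)*X + (2*ν+1)*X^2 + (1-2*ν)*X^3 - (ν+1)*X^4) = ((2*ν-1) + (2*(2*ν+1))*X + (3*(1-2*ν))*X^2 - (4*(ν+1))*X^3) := by
    simp only [map_add, map_sub, map_neg, Derivation.leibniz, Derivation.leibniz_pow,
      derivative_X, hDν, hD2, hD3, hD4, Derivation.map_one_eq_zero, smul_eq_mul,
      nsmul_eq_mul]
    push_cast
    ring
  have hDP : (d⁄dX ℚ) ((-ν + (2*ν-1)*X + (2*ν+1)*X^2 + (1-2*ν)*X^3 - (ν+1)*X^4) * (Iq*Iq) * Phiq^(m+1)) = (((2*ν-1) + (2*(2*ν+1))*X + (3*(1-2*ν))*X^2 - (4*(ν+1))*X^3) * (Iq*Iq) * Phiq^(m+1) + (-ν + (2*ν-1)*X + (2*ν+1)*X^2 + (1-2*ν)*X^3 - (ν+1)*X^4) * (2*(Iq*(Iq*Iq))) * Phiq^(m+1) + (-ν + (2*ν-1)*X + (2*ν+1)*X^2 + (1-2*ν)*X^3 - (ν+1)*X^4)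 * (Iq*Iq) * (ν * ((Phiq^(m+1) * ((1-X)*Jq)) * (2*(Iq*Iq))))) := by
    rw [Derivation.leibniz, Derivation.leibniz, hDB, hDK, hDN]
    simp only [smul_eq_mul]; ring
  have h1nz : (1 - X : PowerSeries ℚ) ≠ 0 := by
    intro h
    have h2 := congrArg (constantCoeff (R := ℚ)) h
    simp at h2
  have h2nz : (1 + X : PowerSeries ℚ) ≠ 0 := by
    intro h
    have h2 := congrArg (constantCoeff (R := ℚ)) h
    simp at h2
  have hnz : ((1-X)^3*(1+X) : PowerSeries ℚ) ≠ 0 := mul_ne_zero (pow_ne_zero _ h1nz) h2nz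
  have hP3 : Phiq^(m+3) = Phiq^(m+1) * (((1+X)*Iq)*((1+X)*Iq)) := by
    rw [show m+3 = m+1+1+1 from rfl, pow_succ, pow_succ, Phiq_def]; ring
  have hP2 : Phiq^(m+2) = Phiq^(m+1) * ((1+X)*Iq) := by
    rw [show m+2 = m+1+1 from rfl, pow_succ, Phiq_def]
  have MI : ν*(ν+1) * Phiq^(m+3) - 3*ν*(2*ν+1) * (X*Phiq^(m+2)) + (ν*ν-1) * (X*(X*Phiq^(m+1))) = X * (d⁄dX ℚ) ((-ν + (2*ν-1)*X + (2*ν+1)*X^2 + (1-2*ν)*X^3 - (ν+1)*X^4) * (Iq*Iq) * Phiq^(m+1)) - (ν+1) * ((-ν + (2*ν-1)*X + (2*ν+1)*X^2 + (1-2*ν)*X^3 - (ν+1)*X^4) * (Iq*Iq) * Phiq^(m+1)) := by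
    apply mul_left_cancel₀ hnz
    have hL : (1-X)^3*(1+X) * (ν*(ν+1) * Phiq^(m+3) - 3*ν*(2*ν+1) * (X*Phiq^(m+2)) + (ν*ν-1) * (X*(X*Phiq^(m+1)))) = Phiq^(m+1) * ( (ν*(ν+1))*((1+X)^3*(1-X)) - (3*ν*(2*ν+1))*(X*(1+X)^2*(1-X)^2) + (ν*ν-1)*(X^2*(1-X)^3*(1+X)) ) := by
      calc (1-X)^3*(1+X) * (ν*(ν+1) * Phiq^(m+3) - 3*ν*(2*ν+1) * (X*Phiq^(m+2)) + (ν*ν-1) * (X*(X*Phiq^(m+1))))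
          = Phiq^(m+1) * ( (ν*(ν+1))*((1+X)^3*(1-X))*((1-X)*Iq)^2 - (3*ν*(2*ν+1))*(X*(1+X)^2*(1-X)^2)*((1-X)*Iq) + (ν*ν-1)*(X^2*(1-X)^3*(1+X)) ) := by rw [hP3, hP2]; ring
        _ = Phiq^(m+1) * ( (ν*(ν+1))*((1+X)^3*(1-X)) - (3*ν*(2*ν+1))*(X*(1+X)^2*(1-X)^2) + (ν*ν-1)*(X^2*(1-X)^3*(1+X)) ) := by rw [hIq]; ring
    have hR : (1-X)^3*(1+X) * (X * (d⁄dX ℚ) ((-ν + (2*ν-1)*X + (2*ν+1)*X^2 + (1-2*ν)*X^3 - (ν+1)*X^4) * (Iq*Iq) * Phiq^(m+1)) - (ν+1) * ((-ν + (2*ν-1)*X + (2*ν+1)*X^2 + (1-2*ν)*X^3 - (ν+1)*X^4) * (Iq*Iq) * Phiq^(m+1))) = Phiq^(m+1) * ( (ν*(ν+1))*((1+X)^3*(1-X)) - (3*ν*(2*ν+1))*(X*(1+X)^2*(1-X)^2) + (ν*ν-1)*(X^2*(1-X)^3*(1+X)) ) := by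
      calc (1-X)^3*(1+X) * (X * (d⁄dX ℚ) ((-ν + (2*ν-1)*X + (2*ν+1)*X^2 + (1-2*ν)*X^3 - (ν+1)*X^4) * (Iq*Iq) * Phiq^(m+1)) - (ν+1) * ((-ν + (2*ν-1)*X + (2*ν+1)*X^2 + (1-2*ν)*X^3 - (ν+1)*X^4) * (Iq*Iq) * Phiq^(m+1)))
          = (1-X)^3*(1+X) * (X * ((((2*ν-1) + (2*(2*ν+1))*X + (3*(1-2*ν))*X^2 - (4*(ν+1))*X^3) * (Iq*Iq) * Phiq^(m+1) + (-ν + (2*ν-1)*X + (2*ν+1)*X^2 + (1-2*ν)*X^3 - (ν+1)*X^4) * (2*(Iq*(Iq*Iq))) * Phiq^(m+1) + (-ν + (2*ν-1)*X + (2*ν+1)*X^2 + (1-2*ν)*X^3 - (ν+1)*X^4) * (Iq*Iq) * (ν * ((Phiq^(m+1) * ((1-X)*Jq)) * (2*(Iq*Iq)))))) - (ν+1) * ((-ν + (2*ν-1)*X + (2*ν+1)*X^2 + (1-2*ν)*X^3 - (ν+1)*X^4) * (Iq*Iq) * Phiq^(m+1))) := by rw [hDP]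
        _ = Phiq^(m+1) * ( X*((2*ν-1) + (2*(2*ν+1))*X + (3*(1-2*ν))*X^2 - (4*(ν+1))*X^3)*((1-X)*(1+X))*((1-X)*Iq)^2 + 2*X*(-ν + (2*ν-1)*X + (2*ν+1)*X^2 + (1-2*ν)*X^3 - (ν+1)*X^4)*(1+X)*((1-X)*Iq)^3 + 2*ν*X*(-ν + (2*ν-1)*X + (2*ν+1)*X^2 + (1-2*ν)*X^3 - (ν+1)*X^4)*((1-X)*Iq)^4*((1+X)*Jq) - (ν+1)*(-ν + (2*ν-1)*X + (2*ν+1)*X^2 + (1-2*ν)*X^3 - (ν+1)*X^4)*((1-X)*(1+X))*((1-X)*Iq)^2 ) := by ring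
        _ = Phiq^(m+1) * ( X*((2*ν-1) + (2*(2*ν+1))*X + (3*(1-2*ν))*X^2 - (4*(ν+1))*X^3)*((1-X)*(1+X)) + 2*X*(-ν + (2*ν-1)*X + (2*ν+1)*X^2 + (1-2*ν)*X^3 - (ν+1)*X^4)*(1+X) + 2*ν*X*(-ν + (2*ν-1)*X + (2*ν+1)*X^2 + (1-2*ν)*X^3 - (ν+1)*X^4) - (ν+1)*(-ν + (2*ν-1)*X + (2*ν+1)*X^2 + (1-2*ν)*X^3 - (ν+1)*X^4)*((1-X)*(1+X)) ) := by rw [hIq, hJq]; ring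
        _ = Phiq^(m+1) * ( (ν*(ν+1))*((1+X)^3*(1-X)) - (3*ν*(2*ν+1))*(X*(1+X)^2*(1-X)^2) + (ν*ν-1)*(X^2*(1-X)^3*(1+X)) ) := by ring
    rw [hL, hR]
  have MI2 : C (R := ℚ) q2 * Phiq^(m+3)
      - C (R := ℚ) q1 * (X*Phiq^(m+2))
      + C (R := ℚ) q0 * (X*(X*Phiq^(m+1)))
      = X * (d⁄dX ℚ) ((-ν + (2*ν-1)*X + (2*ν+1)*X^2 + (1-2*ν)*X^3 - (ν+1)*X^4) * (Iq*Iq) * Phiq^(m+1)) - C (R := ℚ) q3 * ((-ν + (2*ν-1)*X + (2*ν+1)*X^2 + (1-2*ν)*X^3 - (ν+1)*X^4) * (Iq*Iq) * Phiq^(m+1)) := by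
    have e1 : C (R := ℚ) q2 = ν*(ν+1) := by
      rw [hq2, hq3, hν]; simp only [map_mul, map_add, map_one, map_ofNat]; ring
    have e2 : C (R := ℚ) q1 = 3*ν*(2*ν+1) := by
      rw [hq1, hν]; simp only [map_mul, map_add, map_one, map_ofNat]; ring
    have e3 : C (R := ℚ) q0 = ν*ν-1 := by
      rw [hq0, hν]; simp only [map_mul, map_add, map_sub, map_one, map_ofNat]
    have e4 : C (R := ℚ) q3 = ν+1 := by
      rw [hq3, hν]; simp only [map_add, map_one, map_ofNat]; ring
    rw [e1, e2, e3, e4]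
    linear_combination MI
  have h := congrArg (coeff (R := ℚ) (m+2)) MI2
  simp only [map_sub, map_add, coeff_C_mul, coeff_succ_X_mul, coeff_derivative,
    show m+1+1 = m+2 from rfl] at h
  rw [hq3] at h
  push_cast at h ⊢
  linear_combination h

lemma mainlem (s : PowerSeries ℚ) (hs0 : constantCoeff (R := ℚ) s = 1)
    (hs : s ^ 2 = 1 - 6 * X + X ^ 2) :
    ∀ k : ℕ, coeff (R := ℚ) k (Phiq^(k+1)) = ((k:ℚ)+1) * coeff (R := ℚ) (k+1) (C (R := ℚ) (1/2) * (1 - X - s)) := by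
  obtain ⟨f1, f2, frec⟩ := Fside s hs0 hs
  suffices H : ∀ k : ℕ,
      (coeff (R := ℚ) k (Phiq^(k+1)) = ((k:ℚ)+1) * coeff (R := ℚ) (k+1) (C (R := ℚ) (1/2) * (1 - X - s))) ∧
      (coeff (R := ℚ) (k+1) (Phiq^(k+2)) = ((k:ℚ)+2) * coeff (R := ℚ) (k+2) (C (R := ℚ) (1/2) * (1 - X - s))) by
    exact fun k => (H k).1
  intro k
  induction k with
  | zero =>
    constructor
    · rw [a0val, f1]; norm_num
    · rw [a1val, f2]; norm_num
  | succ k ih =>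
    obtain ⟨ih1, ih2⟩ := ih
    refine ⟨?_, ?_⟩
    · have : ((k:ℚ)+1+1) = ((k:ℚ)+2) := by ring
      push_cast
      push_cast at ih2
      linarith [ih2]
    · show coeff (R := ℚ) (k+2) (Phiq^(k+3)) = _
      have hrec := arec k
      have hf := frec k
      have hne : (((k:ℚ)+1)*((k:ℚ)+2)) ≠ 0 := by positivity
      apply mul_left_cancel₀ hne
      push_cast
      push_cast at ih1 ih2 hrec hf
      linear_combination hrec + (3*((k:ℚ)+1)*(2*(k:ℚ)+3))*ih2
        - (((k:ℚ)+1)*((k:ℚ)+1)-1)*ih1 - (((k:ℚ)+1)*((k:ℚ)+2))*hf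


/-- For `n ≥ 1`, the coefficient of `t^n` in `((1+t)/(1-t))^(n+1)` over `ℚ`
equals `(n+1)·r_n`, where the large Schröder numbers are the coefficients of
`(1 - t - √(1-6t+t²))/2 = Σ_{n≥0} r_n t^(n+1)`. -/
theorem statement8 (s : PowerSeries ℚ)
    (hs0 : constantCoeff (R := ℚ) s = 1) (hs : s ^ 2 = 1 - 6 * X + X ^ 2)
    (n : ℕ) (hn : 1 ≤ n) :
    coeff (R := ℚ) n (((1 + X) * (1 - X)⁻¹) ^ (n + 1)) =
      (n + 1) * coeff (R := ℚ) (n + 1) (C (R := ℚ) (1/2) * (1 - X - s)) := by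
  have h := mainlem s hs0 hs n
  exact h
end

section
/- Let F(t) ∈ ℚ[[t]] with F(t) = t + higher order terms (coefficient of t is 1, constant term 0). Then for all n ≥ 0, the coefficient of t^{n+1} in the compositional inverse F^{⟨-1⟩}(t) equals (1/(n+1)) times the coefficient of t^n in (t/F(t))^{n+1}. (Lagrange inversion formula.) -/
open PowerSeries Finset

namespace LagAux

noncomputable def pcomp (A B : PowerSeries ℚ) : PowerSeries ℚ :=
  PowerSeries.mk fun m => coeff m (∑ k ∈ range (m + 1), C (coeff k A) * B ^ k)

lemma coeff_pow_eq_zero {B : PowerSeries ℚ} (hB : constantCoeff B = 0)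
    {m k : ℕ} (h : m < k) : coeff m (B ^ k) = 0 := by
  obtain ⟨b, hb⟩ := X_dvd_iff.mpr hB
  rw [hb, mul_pow, coeff_X_pow_mul', if_neg (by omega)]

lemma coeff_sum_pow (a : ℕ → ℚ) (B : PowerSeries ℚ) (N m : ℕ) :
    coeff m (∑ k ∈ range N, C (a k) * B ^ k) =
      ∑ k ∈ range N, a k * coeff m (B ^ k) := by
  rw [map_sum]
  exact Finset.sum_congr rfl fun k _ => by rw [coeff_C_mul]

lemma coeff_pcomp (A B : PowerSeries ℚ) (m : ℕ) :
    coeff m (pcomp A B) = ∑ k ∈ range (m + 1), coeff k A * coeff m (B ^ k) := by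
  rw [pcomp, coeff_mk, coeff_sum_pow]

/-- extend the range of the defining sum -/
lemma coeff_pcomp' {B : PowerSeries ℚ} (hB : constantCoeff B = 0) (A : PowerSeries ℚ)
    {N m : ℕ} (h : m < N) :
    coeff m (pcomp A B) = ∑ k ∈ range N, coeff k A * coeff m (B ^ k) := by
  rw [coeff_pcomp]
  refine Finset.sum_subset (Finset.range_subset_range.mpr h) fun k hk hk' => ?_
  rw [coeff_pow_eq_zero hB (by simp at hk'; omega), mul_zero]

lemma coeff_mul_congr {m : ℕ} {P P' : PowerSeries ℚ} (Q : PowerSeries ℚ)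
    (h : ∀ p ≤ m, coeff p P = coeff p P') :
    coeff m (P * Q) = coeff m (P' * Q) := by
  rw [coeff_mul, coeff_mul]
  refine Finset.sum_congr rfl fun x hx => ?_
  rw [Finset.HasAntidiagonal.mem_antidiagonal] at hx
  rw [h x.1 (by omega)]

lemma pcomp_X_right (A : PowerSeries ℚ) : pcomp A X = A := by
  ext m
  rw [coeff_pcomp]
  rw [Finset.sum_eq_single m (fun k _ hk => by rw [coeff_X_pow, if_neg (Ne.symm hk), mul_zero])
    (fun h => absurd (Finset.self_mem_range_succ m) h)]
  rw [coeff_X_pow, if_pos rfl, mul_one]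

lemma pcomp_X_left {B : PowerSeries ℚ} (hB : constantCoeff B = 0) : pcomp X B = B := by
  ext m
  rw [coeff_pcomp]
  rw [Finset.sum_eq_single 1 (fun k _ hk => by rw [coeff_X, if_neg hk, zero_mul])
    (fun h => by
      have : m = 0 := by simp at h; omega
      subst this
      simp [coeff_X, hB])]
  rw [coeff_X, if_pos rfl, one_mul, pow_one]

lemma pcomp_one {B : PowerSeries ℚ} : pcomp 1 B = 1 := by
  ext m
  rw [coeff_pcomp]
  rw [Finset.sum_eq_single 0 (fun k _ hk => by
      rw [show (1 : PowerSeries ℚ) = C 1 by simp, coeff_C, if_neg hk, zero_mul])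
    (fun h => absurd (Finset.mem_range.mpr (Nat.succ_pos m)) h)]
  simp

lemma coeff_pcomp_trunc {B : PowerSeries ℚ} (hB : constantCoeff B = 0) (A : PowerSeries ℚ)
    {N m : ℕ} (h : m < N) :
    coeff m (pcomp A B) = coeff m (∑ k ∈ range N, C (coeff k A) * B ^ k) := by
  rw [coeff_pcomp' hB A h, coeff_sum_pow]

lemma pcomp_mul {B : PowerSeries ℚ} (hB : constantCoeff B = 0) (A₁ A₂ : PowerSeries ℚ) :
    pcomp (A₁ * A₂) B = pcomp A₁ B * pcomp A₂ B := by
  ext m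
  set T₁ : PowerSeries ℚ := ∑ k ∈ range (m + 1), C (coeff k A₁) * B ^ k with hT₁
  set T₂ : PowerSeries ℚ := ∑ k ∈ range (m + 1), C (coeff k A₂) * B ^ k with hT₂
  have h1 : coeff m (pcomp A₁ B * pcomp A₂ B) = coeff m (T₁ * T₂) := by
    calc coeff m (pcomp A₁ B * pcomp A₂ B)
        = coeff m (T₁ * pcomp A₂ B) :=
          coeff_mul_congr _ (fun p hp => coeff_pcomp_trunc hB A₁ (by omega))
      _ = coeff m (pcomp A₂ B * T₁) := by rw [mul_comm]
      _ = coeff m (T₂ * T₁) :=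
          coeff_mul_congr _ (fun p hp => coeff_pcomp_trunc hB A₂ (by omega))
      _ = coeff m (T₁ * T₂) := by rw [mul_comm]
  rw [h1, hT₁, hT₂, Finset.sum_mul_sum, map_sum]
  rw [coeff_pcomp]
  have hRHS : ∀ i ∈ range (m+1),
      coeff m (∑ j ∈ range (m+1), C (coeff i A₁) * B ^ i * (C (coeff j A₂) * B ^ j)) =
      ∑ j ∈ range (m+1), coeff i A₁ * coeff j A₂ * coeff m (B ^ (i + j)) := by
    intro i _
    rw [map_sum]
    refine Finset.sum_congr rfl fun j _ => ?_
    rw [show C (coeff i A₁) * B ^ i * (C (coeff j A₂) * B ^ j)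
        = C (coeff i A₁) * (C (coeff j A₂) * B ^ (i + j)) by ring,
      coeff_C_mul, coeff_C_mul]
    ring
  rw [Finset.sum_congr rfl hRHS]
  -- LHS: expand coeff of product A₁*A₂ via antidiagonal
  have hLHS : ∀ k ∈ range (m+1),
      coeff k (A₁ * A₂) * coeff m (B ^ k) =
      ∑ p ∈ Finset.HasAntidiagonal.antidiagonal k, coeff p.1 A₁ * coeff p.2 A₂ * coeff m (B ^ (p.1 + p.2)) := by
    intro k _
    rw [coeff_mul, Finset.sum_mul]
    refine Finset.sum_congr rfl fun p hp => ?_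
    rw [Finset.HasAntidiagonal.mem_antidiagonal] at hp
    rw [hp]
  rw [Finset.sum_congr rfl hLHS]
  -- now both are sums over pairs
  set f : ℕ × ℕ → ℚ := fun p => coeff p.1 A₁ * coeff p.2 A₂ * coeff m (B ^ (p.1 + p.2)) with hf
  have hdisj : (↑(range (m+1)) : Set ℕ).PairwiseDisjoint (fun k => Finset.HasAntidiagonal.antidiagonal k) := by
    intro x _ y _ hxy
    simp only [Finset.disjoint_left]
    intro p hp hp'
    rw [Finset.HasAntidiagonal.mem_antidiagonal] at hp hp'
    omega
  rw [← Finset.sum_biUnion hdisj]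
  rw [show ∑ i ∈ range (m+1), ∑ j ∈ range (m+1), coeff i A₁ * coeff j A₂ * coeff m (B ^ (i+j))
      = ∑ p ∈ (range (m+1)) ×ˢ (range (m+1)), f p by rw [Finset.sum_product]]
  refine Finset.sum_subset ?_ ?_
  · intro p hp
    rw [Finset.mem_biUnion] at hp
    obtain ⟨k, hk, hpk⟩ := hp
    rw [Finset.HasAntidiagonal.mem_antidiagonal] at hpk
    simp only [Finset.mem_product, Finset.mem_range] at *
    omega
  · intro p hp hp'
    have hgt : m < p.1 + p.2 := by
      by_contra hle
      exact hp' (Finset.mem_biUnion.mpr ⟨p.1 + p.2, Finset.mem_range.mpr (by omega),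
        Finset.HasAntidiagonal.mem_antidiagonal.mpr rfl⟩)
    show coeff p.1 A₁ * coeff p.2 A₂ * coeff m (B ^ (p.1 + p.2)) = 0
    rw [coeff_pow_eq_zero hB hgt, mul_zero]

lemma pcomp_pow {B : PowerSeries ℚ} (hB : constantCoeff B = 0) (A : PowerSeries ℚ) (j : ℕ) :
    pcomp (A ^ j) B = (pcomp A B) ^ j := by
  induction j with
  | zero => simpa using pcomp_one
  | succ j ih => rw [pow_succ, pow_succ, pcomp_mul hB, ih]

lemma constantCoeff_pcomp (A : PowerSeries ℚ) {B : PowerSeries ℚ}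
    (hA : constantCoeff A = 0) : constantCoeff (pcomp A B) = 0 := by
  have := coeff_pcomp A B 0
  rw [← coeff_zero_eq_constantCoeff] at *
  simpa [hA] using this

lemma pcomp_assoc (A : PowerSeries ℚ) {B Cs : PowerSeries ℚ}
    (hB : constantCoeff B = 0) (hC : constantCoeff Cs = 0) :
    pcomp (pcomp A B) Cs = pcomp A (pcomp B Cs) := by
  ext m
  rw [coeff_pcomp, coeff_pcomp]
  have hstep : ∀ k ∈ range (m+1),
      coeff k (pcomp A B) * coeff m (Cs ^ k) =
      ∑ j ∈ range (m+1), coeff j A * (coeff k (B ^ j) * coeff m (Cs ^ k)) := by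
    intro k hk
    rw [coeff_pcomp' hB A (show k < m + 1 by simp at hk; omega), Finset.sum_mul]
    exact Finset.sum_congr rfl fun j _ => by ring
  rw [Finset.sum_congr rfl hstep, Finset.sum_comm]
  refine Finset.sum_congr rfl fun j _ => ?_
  rw [← Finset.mul_sum]
  congr 1
  rw [← pcomp_pow hC, coeff_pcomp]

lemma coeff_self_pow {B : PowerSeries ℚ} (hB : constantCoeff B = 0) (d : ℕ) :
    coeff d (B ^ d) = (coeff 1 B) ^ d := by
  obtain ⟨b, hb⟩ := X_dvd_iff.mpr hB
  have h1 : coeff 1 B = constantCoeff b := by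
    rw [hb, show (1:ℕ) = 0 + 1 by rfl, coeff_succ_X_mul, coeff_zero_eq_constantCoeff]
  have h2 : coeff d (X ^ d * b ^ d) = coeff 0 (b ^ d) := by
    simpa using coeff_X_pow_mul (b ^ d) d 0
  rw [hb, mul_pow, h2, coeff_zero_eq_constantCoeff, map_pow, ← hb, h1]

lemma pcomp_left_cancel {B : PowerSeries ℚ} (hB : constantCoeff B = 0)
    (hB1 : coeff 1 B ≠ 0) {A A' : PowerSeries ℚ}
    (h : pcomp A B = pcomp A' B) : A = A' := by
  by_contra hne
  have hex : ∃ d, coeff d A ≠ coeff d A' := by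
    by_contra hco
    push_neg at hco
    exact hne (PowerSeries.ext hco)
  classical
  set d := Nat.find hex with hdd
  have hd : coeff d A ≠ coeff d A' := Nat.find_spec hex
  have hmin : ∀ k, k < d → coeff k A = coeff k A' := by
    intro k hk
    by_contra hc
    exact Nat.find_min hex hk hc
  have hco : coeff d (pcomp A B) = coeff d (pcomp A' B) := by rw [h]
  rw [coeff_pcomp, coeff_pcomp] at hco
  have heq : ∀ k ∈ range (d+1), k ≠ d →
      coeff k A * coeff d (B ^ k) = coeff k A' * coeff d (B ^ k) := by
    intro k hk hkd
    rw [hmin k (by simp at hk; omega)]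
  rw [Finset.sum_eq_add_sum_sdiff_singleton_of_mem (Finset.self_mem_range_succ d),
    Finset.sum_eq_add_sum_sdiff_singleton_of_mem (Finset.self_mem_range_succ d)] at hco
  have hsum : ∑ k ∈ range (d+1) \ {d}, coeff k A * coeff d (B ^ k)
      = ∑ k ∈ range (d+1) \ {d}, coeff k A' * coeff d (B ^ k) := by
    refine Finset.sum_congr rfl fun k hk => ?_
    simp only [Finset.mem_sdiff, Finset.mem_singleton] at hk
    exact heq k hk.1 hk.2
  rw [hsum] at hco
  have : coeff d A * coeff d (B ^ d) = coeff d A' * coeff d (B ^ d) := by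
    linarith
  rw [coeff_self_pow hB] at this
  have hp : (coeff 1 B) ^ d ≠ 0 := pow_ne_zero d hB1
  exact hd (mul_right_cancel₀ hp this)

lemma coeff_pow_mul_deriv (B : PowerSeries ℚ) (k m : ℕ) :
    ((k : ℚ) + 1) * coeff m (B ^ k * d⁄dX ℚ B) =
      coeff (m + 1) (B ^ (k + 1)) * ((m : ℚ) + 1) := by
  have h2 : d⁄dX ℚ (B ^ (k+1)) = (k + 1) • (B ^ k * d⁄dX ℚ B) := by
    rw [Derivation.leibniz_pow (d⁄dX ℚ) B (k + 1)]
    simp only [Nat.add_sub_cancel, smul_eq_mul]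
  have h3 := congrArg (coeff m) h2
  rw [coeff_derivative, map_nsmul, nsmul_eq_mul] at h3
  push_cast at h3
  rw [← h3]

lemma pcomp_deriv {B : PowerSeries ℚ} (hB : constantCoeff B = 0) (A : PowerSeries ℚ) :
    d⁄dX ℚ (pcomp A B) = pcomp (d⁄dX ℚ A) B * d⁄dX ℚ B := by
  ext m
  have hR : coeff m (pcomp (d⁄dX ℚ A) B * d⁄dX ℚ B)
      = ∑ k ∈ range (m+1), coeff (k+1) A * (coeff (m+1) (B^(k+1)) * ((m:ℚ)+1)) := by
    rw [coeff_mul_congr (d⁄dX ℚ B)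
      (fun p hp => coeff_pcomp_trunc hB (d⁄dX ℚ A) (show p < m+1 by omega))]
    rw [Finset.sum_mul, map_sum]
    refine Finset.sum_congr rfl fun k _ => ?_
    rw [mul_assoc, coeff_C_mul, coeff_derivative]
    have := coeff_pow_mul_deriv B k m
    linear_combination (coeff (k+1) A) * this
  have hL : coeff m (d⁄dX ℚ (pcomp A B))
      = ∑ k ∈ range (m+1), coeff (k+1) A * (coeff (m+1) (B^(k+1)) * ((m:ℚ)+1)) := by
    rw [coeff_derivative, coeff_pcomp, Finset.sum_mul,
      Finset.sum_range_succ' (fun k => coeff k A * coeff (m+1) (B^k) * ((m:ℚ)+1)) (m+1)]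
    have h0 : coeff 0 A * coeff (m+1) ((B : PowerSeries ℚ) ^ 0) * ((m:ℚ)+1) = 0 := by
      norm_num [coeff_one]
    rw [h0, add_zero]
    exact Finset.sum_congr rfl fun k _ => by ring
  rw [hL, hR]

lemma residue_key (Fq : PowerSeries ℚ) (j : ℕ) :
    coeff (j+1) ((Fq⁻¹) ^ (j+1)) = - coeff j (d⁄dX ℚ Fq * (Fq⁻¹) ^ (j+2)) := by
  set I : PowerSeries ℚ := Fq⁻¹ with hI
  have h1 := coeff_pow_mul_deriv I j j
  have hj : ((j:ℚ)+1) ≠ 0 := by positivity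
  have h2 : coeff j (I ^ j * d⁄dX ℚ I) = coeff (j+1) (I ^ (j+1)) :=
    mul_left_cancel₀ hj (h1.trans (mul_comm _ _))
  have h3 : d⁄dX ℚ I = -I^2 * d⁄dX ℚ Fq := PowerSeries.derivative_inv' Fq
  have h4 : I ^ j * d⁄dX ℚ I = -(d⁄dX ℚ Fq * I ^ (j+2)) := by
    rw [h3, show j + 2 = j + 2 from rfl, pow_add]
    ring
  rw [← h2, h4, map_neg]

end LagAux

open LagAux in
/-- Lagrange inversion: let `F ∈ ℚ[[t]]` with zero constant term and linear
coefficient 1, written `F = t·Fq` (so `t/F = Fq⁻¹`).  If `G` is the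
compositional inverse of `F`, i.e. `G` has zero constant term and
`F(G(t)) = Σ_k (coeff k F)·G^k = t` (expressed coefficientwise, the sum being
finite in each degree since `G` has zero constant term), then for all `n ≥ 0`
the coefficient of `t^(n+1)` in `G` is `(1/(n+1))·[t^n] (t/F)^(n+1)`. -/
theorem statement10 (F Fq G : PowerSeries ℚ)
    (hF0 : constantCoeff F = 0) (hF1 : coeff 1 F = 1)
    (hFq : F = X * Fq)
    (hG0 : constantCoeff G = 0)
    (hcomp : ∀ m : ℕ,
      coeff m (∑ k ∈ Finset.range (m + 1), C (coeff k F) * G ^ k) =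
        coeff m X)
    (n : ℕ) :
    coeff (n + 1) G = (1 / (n + 1)) * coeff n ((Fq⁻¹) ^ (n + 1)) := by
  classical
  have hFG : pcomp F G = X := PowerSeries.ext fun m => by
    rw [pcomp, coeff_mk]; exact hcomp m
  have hG1 : coeff 1 G = 1 := by
    have h := hcomp 1
    rw [coeff_sum_pow] at h
    simp [Finset.sum_range_succ, hF1, coeff_one] at h
    exact h
  have hGF : pcomp G F = X := by
    apply pcomp_left_cancel hG0 (by rw [hG1]; norm_num)
    rw [pcomp_assoc G hF0 hG0, hFG, pcomp_X_right, pcomp_X_left hG0]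
  -- derivative of identity
  have hder : pcomp (d⁄dX ℚ G) F * d⁄dX ℚ F = 1 := by
    have h := congrArg (d⁄dX ℚ) hGF
    rw [pcomp_deriv hF0 G, PowerSeries.derivative_X] at h
    exact h
  set W : PowerSeries ℚ := pcomp (d⁄dX ℚ G) F with hW
  set I : PowerSeries ℚ := Fq⁻¹ with hIdef
  -- Fq facts
  have hFqc : constantCoeff Fq = 1 := by
    have h : coeff 1 F = constantCoeff Fq := by
      rw [hFq, ← coeff_zero_eq_constantCoeff]
      exact coeff_succ_X_mul 0 Fq
    rw [← h, hF1]
  have hFqI : Fq * I = 1 := PowerSeries.mul_inv_cancel _ (by rw [hFqc]; norm_num)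
  have hcancel : ∀ a b : ℕ, Fq ^ a * I ^ (a + b) = I ^ b := by
    intro a b
    rw [pow_add, ← mul_assoc, ← mul_pow, hFqI, one_pow, one_mul]
  have hDF : d⁄dX ℚ F = Fq + X * d⁄dX ℚ Fq := by
    rw [hFq, Derivation.leibniz, PowerSeries.derivative_X, smul_eq_mul, smul_eq_mul]
    ring
  -- key identity
  have h5 : Fq * I ^ (n+1) = I ^ n := by
    have := hcancel 1 n
    rw [pow_one] at this
    rw [show n + 1 = 1 + n from by omega, this]
  have hkey : I ^ (n+1) = W * I ^ n + W * (X * (d⁄dX ℚ Fq * I ^ (n+1))) := by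
    calc I ^ (n+1) = (W * d⁄dX ℚ F) * I ^ (n+1) := by rw [hder, one_mul]
      _ = W * (Fq * I ^ (n+1)) + W * (X * (d⁄dX ℚ Fq * I ^ (n+1))) := by rw [hDF]; ring
      _ = W * I ^ n + W * (X * (d⁄dX ℚ Fq * I ^ (n+1))) := by rw [h5]
  -- expansion of coeff n (W * Q)
  have hWmul : ∀ Q : PowerSeries ℚ, coeff n (W * Q) =
      ∑ k ∈ range (n+1), ((k:ℚ)+1) * coeff (k+1) G * coeff (n - k) (Fq ^ k * Q) := by
    intro Q
    rw [hW, coeff_mul_congr Q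
      (fun p hp => coeff_pcomp_trunc hF0 (d⁄dX ℚ G) (show p < n+1 by omega))]
    rw [Finset.sum_mul, map_sum]
    refine Finset.sum_congr rfl fun k hk => ?_
    rw [mul_assoc, coeff_C_mul, PowerSeries.coeff_derivative]
    have hFk : F ^ k * Q = X ^ k * (Fq ^ k * Q) := by
      rw [hFq, mul_pow]; ring
    rw [hFk, coeff_X_pow_mul', if_pos (by simp at hk; omega)]
    ring
  have hmain := congrArg (coeff n) hkey
  rw [map_add, hWmul, hWmul, ← Finset.sum_add_distrib] at hmain
  rw [Finset.sum_eq_single n ?side1 ?side2] at hmain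
  case side2 => exact fun h => absurd (Finset.self_mem_range_succ n) h
  case side1 =>
    intro k hk hkn
    have hk' : k < n := by simp at hk; omega
    obtain ⟨j, hj⟩ : ∃ j, n = k + (j+1) := ⟨n - k - 1, by omega⟩
    subst hj
    have e1 : k + (j+1) - k = j + 1 := by omega
    have e2 : Fq ^ k * I ^ (k + (j+1)) = I ^ (j+1) := hcancel k (j+1)
    have e3 : Fq ^ k * (X * (d⁄dX ℚ Fq * I ^ (k + (j+1) + 1)))
        = X * (d⁄dX ℚ Fq * I ^ (j+2)) := by
      rw [show k + (j+1) + 1 = k + (j+2) from by omega]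
      rw [show Fq ^ k * (X * (d⁄dX ℚ Fq * I ^ (k + (j+2))))
          = X * (d⁄dX ℚ Fq * (Fq ^ k * I ^ (k + (j+2)))) from by ring, hcancel k (j+2)]
    rw [e1, e2, e3, coeff_succ_X_mul, residue_key Fq j]
    ring
  -- evaluate the k = n term
  have hconstI : constantCoeff I = 1 := by
    rw [hIdef, PowerSeries.constantCoeff_inv, hFqc]
    norm_num
  have t1 : coeff (n - n) (Fq ^ n * I ^ n) = 1 := by
    rw [Nat.sub_self, coeff_zero_eq_constantCoeff, map_mul, map_pow, map_pow, hFqc, hconstI]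
    norm_num
  have t2 : coeff (n - n) (Fq ^ n * (X * (d⁄dX ℚ Fq * I ^ (n+1)))) = 0 := by
    rw [Nat.sub_self, coeff_zero_eq_constantCoeff]
    simp
  rw [t1, t2, mul_one, mul_zero, add_zero] at hmain
  -- finish
  have hn1 : ((n:ℚ)+1) ≠ 0 := by positivity
  rw [hmain]
  field_simp
end
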